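/- arXiv:1803.03027 — 5 statements merged into one kernel-verified Lean document; each statement's English description precedes it below -/
import Mathlib

section
/- Let H be a complex Hilbert space, let T be a densely defined self-adjoint unbounded operator on H (a linear map defined on a dense subspace Dom(T) ⊆ H that equals its adjoint), and let x be a bounded operator on H. Define L(x) := sup { |⟨ξ, x*(Tη)⟩ − ⟨x(Tξ), η⟩| : ξ, η ∈ Dom(T), ‖ξ‖ = ‖η‖ = 1 } ∈ [0, ∞]. Then L(x) < ∞ if and only if x maps Dom(T) into Dom(T) and the commutator ξ ↦ T(xξ) − x(Tξ), defined on Dom(T), is bounded (i.e., admits a bounded extension to H). Moreover, in this case L(x) equals the operator norm of this bounded extension, i.e., L(x) = sup { ‖T(xξ) − x(Tξ)‖ : ξ ∈ Dom(T), ‖ξ‖ ≤ 1 }. -/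
/-! On `Dom T` the form `B ξ η = ⟪x ξ, T η⟫ - ⟪x (T ξ), η⟫` is sesquilinear, so `L(x) < ∞` means
`‖B ξ η‖ ≤ L ‖ξ‖ ‖η‖`. Such a bound makes `η ↦ ⟪x ξ, T η⟫` bounded, i.e. `x ξ ∈ Dom T* = Dom T`;
symmetry of `T` then gives `B ξ η = ⟪T (x ξ) - x (T ξ), η⟫`, so the commutator is bounded by `L`
on the dense domain and extends to `H`. Conversely, if `y` extends the commutator then
`B ξ η = ⟪y ξ, η⟫`, and the supremum of this over unit vectors of a dense subspace is `‖y‖`. -/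

open scoped ENNReal

noncomputable def Lsem {H : Type*} [NormedAddCommGroup H] [InnerProductSpace ℂ H]
    [CompleteSpace H] (T : H →ₗ.[ℂ] H) (x : H →L[ℂ] H) : ℝ≥0∞ :=
  ⨆ (ξ : T.domain) (_ : ‖(ξ : H)‖ = 1) (η : T.domain) (_ : ‖(η : H)‖ = 1),
    (‖(inner (𝕜 := ℂ) (ξ : H) ((star x) (T η)) : ℂ) -
      (inner (𝕜 := ℂ) (x (T ξ)) (η : H) : ℂ)‖₊ : ℝ≥0∞)

open scoped InnerProductSpace LinearPMap

section Sesquilinear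

variable {𝕜 E F : Type*} [RCLike 𝕜] [NormedAddCommGroup E] [NormedSpace 𝕜 E]
  [NormedAddCommGroup F] [NormedSpace 𝕜 F]

namespace LinearMap

noncomputable def unitSphereSup (f : E →ₗ⋆[𝕜] F →ₗ[𝕜] 𝕜) : ℝ≥0∞ :=
  ⨆ (u : E) (_ : ‖u‖ = 1) (v : F) (_ : ‖v‖ = 1), (‖f u v‖₊ : ℝ≥0∞)

theorem norm_apply_apply_le_of_unitSphere (f : E →ₗ⋆[𝕜] F →ₗ[𝕜] 𝕜) {C : ℝ}
    (h : ∀ u v, ‖u‖ = 1 → ‖v‖ = 1 → ‖f u v‖ ≤ C) (u : E) (v : F) :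
    ‖f u v‖ ≤ C * ‖u‖ * ‖v‖ := by
  rcases eq_or_ne u 0 with rfl | hu
  · simp
  have hunit : ∀ u : E, ‖u‖ = 1 → ∀ v, ‖f u v‖ ≤ C * ‖v‖ := fun u hu v => by
    simpa using (f u).bound_of_sphere_bound one_pos C (fun v hv => h u v hu (by simpa using hv)) v
  set u₀ := (‖u‖⁻¹ : 𝕜) • u
  have hu₀ : (‖u‖ : 𝕜) • u₀ = u := by
    rw [smul_smul, mul_inv_cancel₀ (by simpa using hu), one_smul]
  calc ‖f u v‖ = ‖u‖ * ‖f u₀ v‖ := by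
        conv_lhs => rw [← hu₀]
        rw [LinearMap.map_smulₛₗ₂, smul_eq_mul, norm_mul, RCLike.norm_conj,
          RCLike.norm_coe_norm]
    _ ≤ ‖u‖ * (C * ‖v‖) := by gcongr; exact hunit u₀ (norm_smul_inv_norm hu) v
    _ = C * ‖u‖ * ‖v‖ := by ring

theorem unitSphereSup_le_coe_iff (f : E →ₗ⋆[𝕜] F →ₗ[𝕜] 𝕜) (C : NNReal) :
    f.unitSphereSup ≤ C ↔ ∀ u v, ‖f u v‖ ≤ C * ‖u‖ * ‖v‖ := by
  simp only [unitSphereSup, iSup_le_iff, ENNReal.coe_le_coe, ← NNReal.coe_le_coe, coe_nnnorm]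
  refine ⟨fun h => f.norm_apply_apply_le_of_unitSphere fun u v hu hv => h u hu v hv,
    fun h u hu v hv => ?_⟩
  simpa [hu, hv] using h u v

end LinearMap

end Sesquilinear

section Density

variable {𝕜 E F : Type*} [RCLike 𝕜] [NormedAddCommGroup E] [InnerProductSpace 𝕜 E]
  [NormedAddCommGroup F] [NormedSpace 𝕜 F] {p : Submodule 𝕜 E}

theorem norm_le_of_forall_dense_inner_le (hp : Dense (p : Set E)) (v : E) {M : ℝ} (hM : 0 ≤ M)
    (h : ∀ w : p, ‖⟪v, w⟫_𝕜‖ ≤ M * ‖w‖) : ‖v‖ ≤ M := by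
  have hall : ∀ w, ‖⟪v, w⟫_𝕜‖ ≤ M * ‖w‖ :=
    hp.induction (fun w hw => h ⟨w, hw⟩) (isClosed_le (by fun_prop) (by fun_prop))
  have hv : ‖v‖ * ‖v‖ ≤ M * ‖v‖ := by
    rw [← inner_self_eq_norm_mul_norm (𝕜 := 𝕜), inner_self_re_eq_norm]
    exact hall v
  rcases (norm_nonneg v).eq_or_lt with hv0 | hv0
  · rwa [← hv0]
  · exact le_of_mul_le_mul_right hv hv0

theorem ContinuousLinearMap.opNorm_le_of_dense (hp : Dense (p : Set E)) (y : E →L[𝕜] F) {M : ℝ}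
    (hM : 0 ≤ M) (h : ∀ w : p, ‖y w‖ ≤ M * ‖w‖) : ‖y‖ ≤ M :=
  y.opNorm_le_bound hM <|
    hp.induction (fun w hw => h ⟨w, hw⟩) (isClosed_le (by fun_prop) (by fun_prop))

theorem ContinuousLinearMap.exists_extension_of_dense [CompleteSpace F] (hp : Dense (p : Set E))
    (S : p →L[𝕜] F) : ∃ y : E →L[𝕜] F, ∀ w : p, y w = S w :=
  ⟨S.extend p.subtypeL,
    S.extend_eq hp.denseRange_val isUniformEmbedding_subtype_val.isUniformInducing⟩

end Density

namespace LinearPMap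

variable {𝕜 E F : Type*} [RCLike 𝕜] [NormedAddCommGroup E] [InnerProductSpace 𝕜 E]
  [NormedAddCommGroup F] [InnerProductSpace 𝕜 F]

variable (T : E →ₗ.[𝕜] E) (x : E →L[𝕜] E)

def commutatorForm : T.domain →ₗ⋆[𝕜] T.domain →ₗ[𝕜] 𝕜 :=
  ((innerₛₗ 𝕜).comp ((x : E →ₗ[𝕜] E) ∘ₗ T.domain.subtype)).compl₂ T.toFun -
    ((innerₛₗ 𝕜).comp ((x : E →ₗ[𝕜] E) ∘ₗ T.toFun)).compl₂ T.domain.subtype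

@[simp]
theorem commutatorForm_apply (ξ η : T.domain) :
    T.commutatorForm x ξ η = ⟪x ξ, T η⟫_𝕜 - ⟪x (T ξ), η⟫_𝕜 :=
  rfl

variable [CompleteSpace E] {T x}

theorem mem_adjoint_domain_of_norm_inner_le {T : E →ₗ.[𝕜] F} {y : F} (M : ℝ)
    (h : ∀ u : T.domain, ‖⟪y, T u⟫_𝕜‖ ≤ M * ‖u‖) : y ∈ T†.domain :=
  (mem_adjoint_domain_iff T y).mpr (AddMonoidHomClass.continuous_of_bound _ M h)

theorem _root_.IsSelfAdjoint.isFormalAdjoint (hT : IsSelfAdjoint T) : T.IsFormalAdjoint T := by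
  have h := adjoint_isFormalAdjoint hT.dense_domain
  rwa [isSelfAdjoint_def.mp hT] at h

theorem _root_.IsSelfAdjoint.mem_domain_of_norm_inner_le (hT : IsSelfAdjoint T) {y : E} (M : ℝ)
    (h : ∀ u : T.domain, ‖⟪y, T u⟫_𝕜‖ ≤ M * ‖u‖) : y ∈ T.domain := by
  have h := mem_adjoint_domain_of_norm_inner_le M h
  rwa [isSelfAdjoint_def.mp hT] at h

theorem commutatorForm_apply_eq_inner (hT : IsSelfAdjoint T) {ξ : T.domain}
    (hξ : x ξ ∈ T.domain) (η : T.domain) :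
    T.commutatorForm x ξ η = ⟪T ⟨x ξ, hξ⟩ - x (T ξ), η⟫_𝕜 := by
  rw [commutatorForm_apply, inner_sub_left, hT.isFormalAdjoint ⟨x ξ, hξ⟩ η]

theorem unitSphereSup_commutatorForm_eq (hT : IsSelfAdjoint T)
    (h : ∀ ξ : T.domain, x ξ ∈ T.domain) {y : E →L[𝕜] E}
    (hy : ∀ ξ : T.domain, y ξ = T ⟨x ξ, h ξ⟩ - x (T ξ)) :
    (T.commutatorForm x).unitSphereSup = ‖y‖₊ := by
  have hform : ∀ ξ η, T.commutatorForm x ξ η = ⟪y ξ, η⟫_𝕜 := fun ξ η => by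
    rw [commutatorForm_apply_eq_inner hT (h ξ), hy]
  refine eq_of_forall_ge_iff fun c => ?_
  induction c using ENNReal.recTopCoe with
  | top => simp
  | coe C =>
    rw [LinearMap.unitSphereSup_le_coe_iff, ENNReal.coe_le_coe, ← NNReal.coe_le_coe, coe_nnnorm]
    simp only [hform]
    refine ⟨fun hC => y.opNorm_le_of_dense hT.dense_domain C.2 fun ξ => ?_, fun hC ξ η => ?_⟩
    · exact norm_le_of_forall_dense_inner_le hT.dense_domain _ (by positivity) (hC ξ)
    · calc ‖⟪y ξ, η⟫_𝕜‖ ≤ ‖y ξ‖ * ‖η‖ := norm_inner_le_norm _ _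
        _ ≤ C * ‖ξ‖ * ‖η‖ := by gcongr; exact y.le_of_opNorm_le hC _

theorem exists_commutator_extension (hT : IsSelfAdjoint T)
    (hx : (T.commutatorForm x).unitSphereSup < ⊤) :
    ∃ h : ∀ ξ : T.domain, x ξ ∈ T.domain,
      ∃ y : E →L[𝕜] E, ∀ ξ : T.domain, y ξ = T ⟨x ξ, h ξ⟩ - x (T ξ) := by
  obtain ⟨C, hC⟩ := WithTop.ne_top_iff_exists.mp hx.ne
  have hbound := (LinearMap.unitSphereSup_le_coe_iff _ C).mp hC.ge
  have hmem : ∀ ξ : T.domain, x ξ ∈ T.domain := fun ξ =>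
    hT.mem_domain_of_norm_inner_le (C * ‖ξ‖ + ‖x (T ξ)‖) fun η => calc
      ‖⟪x ξ, T η⟫_𝕜‖ = ‖T.commutatorForm x ξ η + ⟪x (T ξ), η⟫_𝕜‖ := by simp
      _ ≤ C * ‖ξ‖ * ‖η‖ + ‖x (T ξ)‖ * ‖η‖ :=
        (norm_add_le _ _).trans (add_le_add (hbound ξ η) (norm_inner_le_norm _ _))
      _ = (C * ‖ξ‖ + ‖x (T ξ)‖) * ‖η‖ := by ring
  let S : T.domain →ₗ[𝕜] E :=
    T.toFun ∘ₗ ((x : E →ₗ[𝕜] E) ∘ₗ T.domain.subtype).codRestrict T.domain hmem -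
      (x : E →ₗ[𝕜] E) ∘ₗ T.toFun
  have hS : ∀ ξ, ‖S ξ‖ ≤ C * ‖ξ‖ := fun ξ =>
    norm_le_of_forall_dense_inner_le hT.dense_domain _ (by positivity) fun η => by
      have := hbound ξ η
      rwa [commutatorForm_apply_eq_inner hT (hmem ξ)] at this
  obtain ⟨y, hy⟩ := (S.mkContinuous C hS).exists_extension_of_dense hT.dense_domain
  exact ⟨hmem, y, hy⟩

end LinearPMap

theorem Lsem_eq_unitSphereSup {H : Type*} [NormedAddCommGroup H] [InnerProductSpace ℂ H]
    [CompleteSpace H] (T : H →ₗ.[ℂ] H) (x : H →L[ℂ] H) :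
    Lsem T x = (T.commutatorForm x).unitSphereSup := by
  simp only [Lsem, LinearMap.unitSphereSup, LinearPMap.commutatorForm_apply,
    ContinuousLinearMap.star_eq_adjoint, ContinuousLinearMap.adjoint_inner_right]
  rfl

theorem stmt0_general {H : Type*} [NormedAddCommGroup H] [InnerProductSpace ℂ H] [CompleteSpace H]
    (T : H →ₗ.[ℂ] H) (hsa : IsSelfAdjoint T)
    (x : H →L[ℂ] H) :
    (Lsem T x < ⊤ ↔
      ∃ h : ∀ ξ : T.domain, x (ξ : H) ∈ T.domain,
        ∃ y : H →L[ℂ] H, ∀ ξ : T.domain, y (ξ : H) = T ⟨x (ξ : H), h ξ⟩ - x (T ξ)) ∧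
    (∀ (h : ∀ ξ : T.domain, x (ξ : H) ∈ T.domain) (y : H →L[ℂ] H),
      (∀ ξ : T.domain, y (ξ : H) = T ⟨x (ξ : H), h ξ⟩ - x (T ξ)) →
        Lsem T x = (‖y‖₊ : ℝ≥0∞)) := by
  rw [Lsem_eq_unitSphereSup]
  refine ⟨⟨LinearPMap.exists_commutator_extension hsa, ?_⟩,
    fun h y hy => LinearPMap.unitSphereSup_commutatorForm_eq hsa h hy⟩
  rintro ⟨h, y, hy⟩
  rw [LinearPMap.unitSphereSup_commutatorForm_eq hsa h hy]
  exact ENNReal.coe_lt_top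

/-- For a densely defined self-adjoint operator `T` on a complex Hilbert space and
a bounded operator `x`, `L(x) < ∞` iff `x` preserves `Dom T` and the commutator
`ξ ↦ T(xξ) − x(Tξ)` admits a bounded extension `y`; in that case `L(x) = ‖y‖`. -/
theorem stmt0 {H : Type*} [NormedAddCommGroup H] [InnerProductSpace ℂ H] [CompleteSpace H]
    (T : H →ₗ.[ℂ] H) (hdense : Dense (T.domain : Set H)) (hsa : IsSelfAdjoint T)
    (x : H →L[ℂ] H) :
    (Lsem T x < ⊤ ↔
      ∃ h : ∀ ξ : T.domain, x (ξ : H) ∈ T.domain,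
        ∃ y : H →L[ℂ] H, ∀ ξ : T.domain, y (ξ : H) = T ⟨x (ξ : H), h ξ⟩ - x (T ξ)) ∧
    (∀ (h : ∀ ξ : T.domain, x (ξ : H) ∈ T.domain) (y : H →L[ℂ] H),
      (∀ ξ : T.domain, y (ξ : H) = T ⟨x (ξ : H), h ξ⟩ - x (T ξ)) →
        Lsem T x = (‖y‖₊ : ℝ≥0∞)) :=
  stmt0_general T hsa x
end

section
/- Let H be a complex Hilbert space and T a densely defined self-adjoint unbounded operator on H. For a bounded operator x on H define L(x) := sup { |⟨ξ, x*(Tη)⟩ − ⟨x(Tξ), η⟩| : ξ, η ∈ Dom(T), ‖ξ‖ = ‖η‖ = 1 } ∈ [0, ∞]. Then: (1) L is lower semicontinuous on the bounded operators with respect to the operator norm; (2) L is *-invariant: L(x*) = L(x) for every bounded operator x; (3) L satisfies the Leibniz inequality L(xy) ≤ L(x)·‖y‖ + ‖x‖·L(y) for all bounded operators x, y (with the convention that the right-hand side is ∞ whenever L(x) = ∞ or L(y) = ∞); in particular, on the set of x with L(x) < ∞, L is a seminorm. -/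
/-!
Write `B_x(ξ, η) = ⟪ξ, x* T η⟫ - ⟪x T ξ, η⟫`, so that `L(x)` is the supremum of `|B_x|` over
unit vectors of `Dom T`. Each `B_x(ξ, η)` is continuous and conjugate-linear in `x`, and
`B_{x*}(ξ, η) = -conj B_x(η, ξ)`; this gives lower semicontinuity, `*`-invariance and the seminorm
properties. For the Leibniz rule, `|B_x(ξ, η)| ≤ L(x) ‖ξ‖ ‖η‖` shows that when `L(x) < ∞` the
functional `η ↦ ⟪x ξ, T η⟫ = B_x(ξ, η) + ⟪x T ξ, η⟫` is bounded, so `x` maps `Dom T` into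
`Dom T* = Dom T`. Then `a = y ξ` and `b = x* η` lie in `Dom T`, and the symmetry
`⟪T a, b⟫ = ⟪a, T b⟫` yields `B_{xy}(ξ, η) = B_x(a, η) + B_y(ξ, b)`, where `‖a‖ ≤ ‖y‖` and
`‖b‖ ≤ ‖x‖`.
-/

open scoped ENNReal

open scoped InnerProductSpace ComplexConjugate

theorem Submodule.exists_norm_eq_one_smul {𝕜 E : Type*} [RCLike 𝕜] [NormedAddCommGroup E]
    [NormedSpace 𝕜 E] {p : Submodule 𝕜 E} {v : p} (hv : (v : E) ≠ 0) :
    ∃ v' : p, ‖(v' : E)‖ = 1 ∧ v = (‖(v : E)‖ : 𝕜) • v' := by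
  refine ⟨(‖(v : E)‖ : 𝕜)⁻¹ • v, norm_smul_inv_norm hv, ?_⟩
  rw [smul_smul, mul_inv_cancel₀ (by simpa using hv), one_smul]

section

variable {H : Type*} [NormedAddCommGroup H] [InnerProductSpace ℂ H] [CompleteSpace H]
  {T : H →ₗ.[ℂ] H}

/-- Formally `⟪[T, x] ξ, η⟫`; it makes sense without `x` preserving the domain of `T`. -/
noncomputable def commutatorForm (T : H →ₗ.[ℂ] H) (x : H →L[ℂ] H) (ξ η : T.domain) : ℂ :=
  ⟪(ξ : H), star x (T η)⟫_ℂ - ⟪x (T ξ), (η : H)⟫_ℂ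

theorem Lsem_le {x : H →L[ℂ] H} {C : ℝ≥0∞}
    (h : ∀ ξ η : T.domain, ‖(ξ : H)‖ = 1 → ‖(η : H)‖ = 1 →
      (‖commutatorForm T x ξ η‖₊ : ℝ≥0∞) ≤ C) :
    Lsem T x ≤ C :=
  iSup₂_le fun ξ hξ => iSup₂_le fun η hη => h ξ η hξ hη

theorem le_Lsem (x : H →L[ℂ] H) {ξ η : T.domain} (hξ : ‖(ξ : H)‖ = 1) (hη : ‖(η : H)‖ = 1) :
    (‖commutatorForm T x ξ η‖₊ : ℝ≥0∞) ≤ Lsem T x :=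
  le_iSup₂_of_le ξ hξ <| le_iSup₂_of_le η hη le_rfl

theorem commutatorForm_smul_smul (x : H →L[ℂ] H) (c d : ℂ) (ξ η : T.domain) :
    commutatorForm T x (c • ξ) (d • η) = conj c * d * commutatorForm T x ξ η := by
  simp only [commutatorForm, LinearPMap.map_smul, Submodule.coe_smul, map_smul,
    inner_smul_left, inner_smul_right]
  ring

theorem commutatorForm_add (x y : H →L[ℂ] H) (ξ η : T.domain) :
    commutatorForm T (x + y) ξ η = commutatorForm T x ξ η + commutatorForm T y ξ η := by
  simp only [commutatorForm, star_add, add_apply, inner_add_left, inner_add_right]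
  ring

theorem commutatorForm_smul (c : ℂ) (x : H →L[ℂ] H) (ξ η : T.domain) :
    commutatorForm T (c • x) ξ η = conj c * commutatorForm T x ξ η := by
  simp only [commutatorForm, star_smul, smul_apply, inner_smul_left, inner_smul_right,
    starRingEnd_apply]
  ring

theorem commutatorForm_star (x : H →L[ℂ] H) (ξ η : T.domain) :
    commutatorForm T (star x) ξ η = -conj (commutatorForm T x η ξ) := by
  simp only [commutatorForm, star_star, map_sub, inner_conj_symm]
  ring

theorem nnnorm_commutatorForm_le (x : H →L[ℂ] H) (ξ η : T.domain) :
    (‖commutatorForm T x ξ η‖₊ : ℝ≥0∞) ≤ Lsem T x * ‖(ξ : H)‖₊ * ‖(η : H)‖₊ := by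
  rcases eq_or_ne (ξ : H) 0 with hξ | hξ
  · simp [commutatorForm, show ξ = 0 from Subtype.ext hξ]
  rcases eq_or_ne (η : H) 0 with hη | hη
  · simp [commutatorForm, show η = 0 from Subtype.ext hη]
  obtain ⟨ξ', hξ', hξeq⟩ := Submodule.exists_norm_eq_one_smul hξ
  obtain ⟨η', hη', hηeq⟩ := Submodule.exists_norm_eq_one_smul hη
  have hscale : commutatorForm T x ξ η
      = ‖(ξ : H)‖ * ‖(η : H)‖ * commutatorForm T x ξ' η' := by
    conv_lhs => rw [hξeq, hηeq, commutatorForm_smul_smul, RCLike.conj_ofReal]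
    rfl
  rw [hscale, nnnorm_mul, nnnorm_mul, Complex.nnnorm_real, Complex.nnnorm_real, nnnorm_norm,
    nnnorm_norm]
  calc _ ≤ ‖(ξ : H)‖₊ * ‖(η : H)‖₊ * Lsem T x := by push_cast; gcongr; exact le_Lsem x hξ' hη'
    _ = _ := by ring

theorem Lsem_add_le (x y : H →L[ℂ] H) : Lsem T (x + y) ≤ Lsem T x + Lsem T y :=
  Lsem_le fun ξ η hξ hη => calc
    (‖commutatorForm T (x + y) ξ η‖₊ : ℝ≥0∞)
      ≤ ‖commutatorForm T x ξ η‖₊ + ‖commutatorForm T y ξ η‖₊ := by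
        rw [commutatorForm_add]; exact_mod_cast nnnorm_add_le _ _
    _ ≤ Lsem T x + Lsem T y := add_le_add (le_Lsem x hξ hη) (le_Lsem y hξ hη)

theorem Lsem_smul (c : ℂ) (x : H →L[ℂ] H) : Lsem T (c • x) = ‖c‖₊ * Lsem T x := by
  simp only [Lsem, ENNReal.mul_iSup]
  refine iSup_congr fun ξ => iSup_congr fun _ => iSup_congr fun η => iSup_congr fun _ => ?_
  rw [← commutatorForm, ← commutatorForm, commutatorForm_smul, nnnorm_mul, RCLike.nnnorm_conj,
    ENNReal.coe_mul]

theorem Lsem_zero : Lsem T 0 = 0 := by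
  simpa using Lsem_smul (T := T) 0 0

theorem Lsem_star (x : H →L[ℂ] H) : Lsem T (star x) = Lsem T x := by
  have star_le (y : H →L[ℂ] H) : Lsem T (star y) ≤ Lsem T y :=
    Lsem_le fun ξ η hξ hη => by
      rw [commutatorForm_star, nnnorm_neg, RCLike.nnnorm_conj]
      exact le_Lsem y hη hξ
  exact le_antisymm (star_le x) (by simpa using star_le (star x))

theorem lowerSemicontinuous_Lsem : LowerSemicontinuous (Lsem T) := by
  refine lowerSemicontinuous_iSup fun ξ => lowerSemicontinuous_iSup fun _ =>
    lowerSemicontinuous_iSup fun η => lowerSemicontinuous_iSup fun _ =>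
      Continuous.lowerSemicontinuous ?_
  fun_prop

section SelfAdjoint

variable (hT : IsSelfAdjoint T)
include hT

theorem IsSelfAdjoint.isFormalAdjoint_self : T.IsFormalAdjoint T := by
  have h := LinearPMap.adjoint_isFormalAdjoint hT.dense_domain (T := T)
  rwa [LinearPMap.isSelfAdjoint_def.mp hT] at h

theorem apply_mem_domain_of_Lsem_ne_top {x : H →L[ℂ] H} (hx : Lsem T x ≠ ⊤) (ξ : T.domain) :
    x ξ ∈ T.domain := by
  suffices x ξ ∈ T.adjoint.domain by rwa [LinearPMap.isSelfAdjoint_def.mp hT] at this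
  rw [LinearPMap.mem_adjoint_domain_iff]
  refine AddMonoidHomClass.continuous_of_bound _ ((Lsem T x).toReal * ‖(ξ : H)‖ + ‖x (T ξ)‖)
    fun η => ?_
  have hsplit : ⟪x ξ, T η⟫_ℂ = commutatorForm T x ξ η + ⟪x (T ξ), (η : H)⟫_ℂ := by
    rw [commutatorForm, ContinuousLinearMap.star_eq_adjoint,
      ContinuousLinearMap.adjoint_inner_right, sub_add_cancel]
  have hform : ‖commutatorForm T x ξ η‖ ≤ (Lsem T x).toReal * ‖(ξ : H)‖ * ‖(η : H)‖ := by
    have := ENNReal.toReal_mono (by finiteness) (nnnorm_commutatorForm_le (T := T) x ξ η)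
    simpa using this
  change ‖⟪x ξ, T η⟫_ℂ‖ ≤ _
  calc ‖⟪x ξ, T η⟫_ℂ‖ ≤ ‖commutatorForm T x ξ η‖ + ‖x (T ξ)‖ * ‖(η : H)‖ := by
        rw [hsplit]; exact (norm_add_le _ _).trans (by gcongr; exact norm_inner_le_norm _ _)
    _ ≤ _ := by rw [Submodule.coe_norm]; linarith

theorem commutatorForm_mul {x y : H →L[ℂ] H} {ξ η : T.domain} (ha : y ξ ∈ T.domain)
    (hb : star x η ∈ T.domain) :
    commutatorForm T (x * y) ξ η
      = commutatorForm T x ⟨y ξ, ha⟩ η + commutatorForm T y ξ ⟨star x η, hb⟩ := by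
  have hx (w : H) : ⟪x w, (η : H)⟫_ℂ = ⟪w, star x η⟫_ℂ := by
    rw [ContinuousLinearMap.star_eq_adjoint, ContinuousLinearMap.adjoint_inner_right]
  have hy (w : H) : ⟪(ξ : H), star y w⟫_ℂ = ⟪y ξ, w⟫_ℂ := by
    rw [ContinuousLinearMap.star_eq_adjoint, ContinuousLinearMap.adjoint_inner_right]
  have hsymm := hT.isFormalAdjoint_self ⟨y ξ, ha⟩ ⟨star x η, hb⟩
  simp only [commutatorForm, star_mul, mul_apply_eq_comp, hx, hy] at hsymm ⊢
  rw [hsymm]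
  ring

theorem Lsem_mul_le_of_ne_top {x y : H →L[ℂ] H} (hx : Lsem T x ≠ ⊤) (hy : Lsem T y ≠ ⊤) :
    Lsem T (x * y) ≤ Lsem T x * ‖y‖₊ + ‖x‖₊ * Lsem T y := by
  refine Lsem_le fun ξ η hξ hη => ?_
  have ha := apply_mem_domain_of_Lsem_ne_top hT hy ξ
  have hb := apply_mem_domain_of_Lsem_ne_top hT ((Lsem_star x).symm ▸ hx) η
  have hξ1 : ‖(ξ : H)‖₊ = 1 := NNReal.eq hξ
  have hη1 : ‖(η : H)‖₊ = 1 := NNReal.eq hη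
  calc (‖commutatorForm T (x * y) ξ η‖₊ : ℝ≥0∞)
      ≤ ‖commutatorForm T x ⟨y ξ, ha⟩ η‖₊ + ‖commutatorForm T y ξ ⟨star x η, hb⟩‖₊ := by
        rw [commutatorForm_mul hT ha hb]; exact_mod_cast nnnorm_add_le _ _
    _ ≤ Lsem T x * ‖y ξ‖₊ * ‖(η : H)‖₊ + Lsem T y * ‖(ξ : H)‖₊ * ‖star x η‖₊ :=
        add_le_add (nnnorm_commutatorForm_le x _ η) (nnnorm_commutatorForm_le y ξ _)
    _ ≤ Lsem T x * ‖y‖₊ + ‖x‖₊ * Lsem T y := by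
        rw [hξ1, hη1, ENNReal.coe_one, mul_one, mul_one, mul_comm (Lsem T y)]
        gcongr
        · simpa [hξ1] using y.le_opNNNorm ξ
        · simpa [hη1] using (star x).le_opNNNorm η

theorem Lsem_mul_le (x y : H →L[ℂ] H) :
    Lsem T (x * y) ≤ Lsem T x * ‖y‖₊ + ‖x‖₊ * Lsem T y := by
  rcases eq_or_ne (Lsem T x) ⊤ with hx | hx
  · rcases eq_or_ne y 0 with rfl | hy
    · simp [Lsem_zero]
    · simp [hx, hy]
  rcases eq_or_ne (Lsem T y) ⊤ with hy | hy
  · rcases eq_or_ne x 0 with rfl | hx'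
    · simp [Lsem_zero]
    · simp [hy, hx']
  exact Lsem_mul_le_of_ne_top hT hx hy

end SelfAdjoint

end

theorem stmt1_general {H : Type*} [NormedAddCommGroup H] [InnerProductSpace ℂ H] [CompleteSpace H]
    (T : H →ₗ.[ℂ] H) (hsa : IsSelfAdjoint T) :
    LowerSemicontinuous (Lsem T) ∧
    (∀ x : H →L[ℂ] H, Lsem T (star x) = Lsem T x) ∧
    (∀ x y : H →L[ℂ] H,
      Lsem T (x * y) ≤ Lsem T x * (‖y‖₊ : ℝ≥0∞) + (‖x‖₊ : ℝ≥0∞) * Lsem T y) ∧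
    (∀ x y : H →L[ℂ] H, Lsem T (x + y) ≤ Lsem T x + Lsem T y) ∧
    (∀ (c : ℂ) (x : H →L[ℂ] H), Lsem T (c • x) = (‖c‖₊ : ℝ≥0∞) * Lsem T x) :=
  ⟨lowerSemicontinuous_Lsem, Lsem_star, Lsem_mul_le hsa, Lsem_add_le, Lsem_smul⟩

/-- For a densely defined self-adjoint operator `T` on a complex Hilbert space,
the map `L = Lsem T` is (1) lower semicontinuous for the operator norm, (2) `*`-invariant,
(3) Leibniz: `L(xy) ≤ L(x)‖y‖ + ‖x‖L(y)`; and it is subadditive and absolutely homogeneous,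
hence a seminorm on `{x : L(x) < ∞}`. -/
theorem stmt1 {H : Type*} [NormedAddCommGroup H] [InnerProductSpace ℂ H] [CompleteSpace H]
    (T : H →ₗ.[ℂ] H) (hdense : Dense (T.domain : Set H)) (hsa : IsSelfAdjoint T) :
    LowerSemicontinuous (Lsem T) ∧
    (∀ x : H →L[ℂ] H, Lsem T (star x) = Lsem T x) ∧
    (∀ x y : H →L[ℂ] H,
      Lsem T (x * y) ≤ Lsem T x * (‖y‖₊ : ℝ≥0∞) + (‖x‖₊ : ℝ≥0∞) * Lsem T y) ∧
    (∀ x y : H →L[ℂ] H, Lsem T (x + y) ≤ Lsem T x + Lsem T y) ∧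
    (∀ (c : ℂ) (x : H →L[ℂ] H), Lsem T (c • x) = (‖c‖₊ : ℝ≥0∞) * Lsem T x) :=
  stmt1_general T hsa
end

section
/- For every k ∈ ℕ, the indicator function projection χ_{\{q^{2k}\}}(A) is the norm limit, as n → ∞, of q^{−2kn} Aⁿ − Σ_{j=1}^{k} q^{−2jn} χ_{\{q^{2(k−j)}\}}(A); that is, ‖ χ_{\{q^{2k}\}}(A) − ( q^{−2kn} Aⁿ − Σ_{j=1}^{k} q^{−2jn} χ_{\{q^{2(k−j)}\}}(A) ) ‖ → 0 as n → ∞. -/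
/-! Write `r = q ^ 2`. On `{0} ∪ {r ^ m}` the function whose `cfc` is the element in question
is `0` at `t = 0` (once `n ≥ 1`) and at every `r ^ m` with `m ≤ k`: at `t = r ^ (k - j)` the
`j`-th correction term cancels `r ^ (-k n) t ^ n`. At `r ^ m` with `m > k` it equals
`-r ^ ((m - k) n)`. Hence the norm is at most `r ^ n → 0`. The indicators are continuous on the
spectrum because each `r ^ m` is an isolated point of `{0} ∪ {r ^ j}`. -/

open Filter Finset Topology

theorem continuousOn_ite_eq_of_eventually_eq {X Y : Type*} [TopologicalSpace X] [T1Space X]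
    [DecidableEq X] [TopologicalSpace Y] {s : Set X} {a : X} (ha : ∀ᶠ x in 𝓝[s] a, x = a)
    (b c : Y) : ContinuousOn (fun x => if x = a then b else c) s := by
  intro x _
  rcases eq_or_ne x a with rfl | hxa
  · exact continuousWithinAt_const.congr_of_eventuallyEq
      (ha.mono fun y hy => if_pos hy) (if_pos rfl)
  · refine (continuousAt_const (y := c)).congr ?_ |>.continuousWithinAt
    filter_upwards [isOpen_compl_singleton.mem_nhds hxa] with y hy
    exact (if_neg hy).symm

theorem eventually_nhdsWithin_eq_pow {r : ℝ} (hr₀ : 0 < r) (hr₁ : r < 1) (m : ℕ) :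
    ∀ᶠ t in 𝓝[{0} ∪ Set.range (fun j : ℕ => r ^ j)] (r ^ m), t = r ^ m := by
  have hlow : r ^ m * r < r ^ m := mul_lt_of_lt_one_right (pow_pos hr₀ m) hr₁
  have hup : r ^ m < r ^ m / r := lt_div_iff₀ hr₀ |>.2 hlow
  filter_upwards [self_mem_nhdsWithin, mem_nhdsWithin_of_mem_nhds (Ioo_mem_nhds hlow hup)]
    with t ht ⟨htlow, htup⟩
  rcases ht with rfl | ⟨j, rfl⟩
  · exact absurd htlow (not_lt.2 (by positivity))
  · rw [← pow_succ, pow_lt_pow_iff_right_of_lt_one₀ hr₀ hr₁] at htlow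
    rw [lt_div_iff₀ hr₀, ← pow_succ, pow_lt_pow_iff_right_of_lt_one₀ hr₀ hr₁] at htup
    rw [show j = m by omega]

theorem sum_Icc_mul_ite_pow_eq {r : ℝ} (hr₀ : 0 < r) (hr₁ : r ≠ 1) (c : ℕ → ℝ)
    (k m : ℕ) :
    ∑ j ∈ Icc 1 k, c j * (if r ^ m = r ^ (k - j) then 1 else 0) =
      if m < k then c (k - m) else 0 := by
  have hiff : ∀ j ∈ Icc 1 k, (r ^ m = r ^ (k - j) ↔ k - m = j) := fun j hj => by
    rw [pow_right_inj₀ hr₀ hr₁, mem_Icc] at *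
    omega
  calc ∑ j ∈ Icc 1 k, c j * (if r ^ m = r ^ (k - j) then 1 else 0)
      = ∑ j ∈ Icc 1 k, if k - m = j then c j else 0 :=
        sum_congr rfl fun j hj => by simp only [hiff j hj, mul_ite, mul_one, mul_zero]
    _ = if m < k then c (k - m) else 0 := by
        rw [sum_ite_eq]
        congr 1
        simp only [mem_Icc, eq_iff_iff]
        omega

theorem abs_ite_sub_sub_sum_le {r : ℝ} (hr₀ : 0 < r) (hr₁ : r < 1) (k n : ℕ) {t : ℝ}
    (ht : t ∈ ({0} ∪ Set.range (fun j : ℕ => r ^ j) : Set ℝ)) :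
    |(if t = r ^ k then 1 else 0) - (((r ^ k) ^ n)⁻¹ * t ^ n -
        ∑ j ∈ Icc 1 k, ((r ^ j) ^ n)⁻¹ * (if t = r ^ (k - j) then 1 else 0))| ≤ r ^ n := by
  have hr : ∀ j, (r ^ j) ^ n ≠ 0 := fun j => pow_ne_zero n (pow_pos hr₀ j).ne'
  rcases ht with rfl | ⟨m, rfl⟩
  · have h0 : ∀ j, (0 : ℝ) ≠ r ^ j := fun j => (pow_pos hr₀ j).ne
    rcases n.eq_zero_or_pos with rfl | hn
    · simp [h0]
    · simp [h0, zero_pow hn.ne', pow_nonneg hr₀.le]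
  dsimp only
  rw [sum_Icc_mul_ite_pow_eq hr₀ hr₁.ne]
  simp only [pow_right_inj₀ hr₀ hr₁.ne]
  rcases lt_trichotomy m k with hmk | rfl | hkm
  · rw [if_neg hmk.ne, if_pos hmk, ← pow_mul_pow_sub r hmk.le, mul_pow, mul_inv_rev,
      inv_mul_cancel_right₀ (hr m)]
    simp [pow_nonneg hr₀.le]
  · simp [hr, pow_nonneg hr₀.le]
  · rw [if_neg hkm.ne', if_neg hkm.not_gt, ← pow_mul_pow_sub r hkm.le, mul_pow,
      inv_mul_cancel_left₀ (hr k), sub_zero, zero_sub, abs_neg, abs_of_nonneg (by positivity)]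
    exact pow_le_pow_left₀ (pow_nonneg hr₀.le _)
      (pow_le_of_le_one hr₀.le hr₁.le (by omega)) n

theorem norm_cfc_ite_sub_smul_pow_sub_sum_le {𝒜 : Type*} [CStarAlgebra 𝒜] {r : ℝ}
    (hr₀ : 0 < r) (hr₁ : r < 1) {A : 𝒜} (hA : IsSelfAdjoint A)
    (hspec : spectrum ℝ A ⊆ {0} ∪ Set.range (fun j : ℕ => r ^ j)) (k n : ℕ) :
    ‖cfc (fun t : ℝ => if t = r ^ k then (1 : ℝ) else 0) A -
        (((((r ^ k) ^ n)⁻¹ : ℝ) : ℂ) • A ^ n -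
          ∑ j ∈ Icc 1 k, ((((r ^ j) ^ n)⁻¹ : ℝ) : ℂ) •
            cfc (fun t : ℝ => if t = r ^ (k - j) then (1 : ℝ) else 0) A)‖ ≤ r ^ n := by
  have hχ (m : ℕ) :
      ContinuousOn (fun t : ℝ => if t = r ^ m then (1 : ℝ) else 0) (spectrum ℝ A) :=
    continuousOn_ite_eq_of_eventually_eq
      ((eventually_nhdsWithin_eq_pow hr₀ hr₁ m).filter_mono (nhdsWithin_mono _ hspec)) 1 0
  have hsum :
      cfc (fun t => ∑ j ∈ Icc 1 k, ((r ^ j) ^ n)⁻¹ * if t = r ^ (k - j) then 1 else 0) A =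
        ∑ j ∈ Icc 1 k, ((r ^ j) ^ n)⁻¹ •
          cfc (fun t : ℝ => if t = r ^ (k - j) then 1 else 0) A := by
    rw [← Finset.sum_fn, cfc_sum (hf := fun j _ => continuousOn_const.fun_mul (hχ (k - j)))]
    exact sum_congr rfl fun j _ => cfc_const_mul _ _ A (hχ _)
  have key : cfc (fun t => (if t = r ^ k then 1 else 0) - (((r ^ k) ^ n)⁻¹ * t ^ n -
      ∑ j ∈ Icc 1 k, ((r ^ j) ^ n)⁻¹ * if t = r ^ (k - j) then 1 else 0)) A =
      cfc (fun t : ℝ => if t = r ^ k then 1 else 0) A - (((r ^ k) ^ n)⁻¹ • A ^ n -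
        ∑ j ∈ Icc 1 k, ((r ^ j) ^ n)⁻¹ •
          cfc (fun t : ℝ => if t = r ^ (k - j) then 1 else 0) A) := by
    rw [cfc_sub _ _ A (hχ k), cfc_sub _ _ A (by fun_prop)
        (continuousOn_finsetSum _ fun j _ => continuousOn_const.fun_mul (hχ (k - j))),
      cfc_const_mul _ _ A, cfc_pow_id A n hA, hsum]
  simp only [Complex.coe_smul]
  rw [← key]
  exact norm_cfc_le (by positivity) fun t ht => abs_ite_sub_sub_sum_le hr₀ hr₁ k n (hspec ht)

/-- If `A` is a selfadjoint element of a unital C*-algebra with spectrum contained in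
`{0} ∪ {q^{2k} : k ∈ ℕ}`, then for every `k`, the spectral projection `χ_{{q^{2k}}}(A)` is the
norm limit of `q^{−2kn} Aⁿ − Σ_{j=1}^{k} q^{−2jn} χ_{{q^{2(k−j)}}}(A)` as `n → ∞`. -/
theorem stmt4 {𝒜 : Type*} [CStarAlgebra 𝒜]
    (q : ℝ) (hq : q ∈ Set.Ioo (0 : ℝ) 1)
    (A : 𝒜) (hA : IsSelfAdjoint A)
    (hspec : spectrum ℝ A ⊆ {0} ∪ Set.range (fun k : ℕ => q ^ (2 * k)))
    (k : ℕ) :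
    Filter.Tendsto (fun n : ℕ =>
      ‖cfc (fun t : ℝ => if t = q ^ (2 * k) then (1 : ℝ) else 0) A -
        ((((q ^ (2 * k * n) : ℝ)⁻¹ : ℝ) : ℂ) • A ^ n -
          ∑ j ∈ Finset.Icc 1 k, (((q ^ (2 * j * n) : ℝ)⁻¹ : ℝ) : ℂ) •
            cfc (fun t : ℝ => if t = q ^ (2 * (k - j)) then (1 : ℝ) else 0) A)‖)
      Filter.atTop (nhds 0) := by
  obtain ⟨hq₀, hq₁⟩ := hq
  have hr₀ : 0 < q ^ 2 := by positivity
  have hr₁ : q ^ 2 < 1 := pow_lt_one₀ hq₀.le hq₁ two_ne_zero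
  simp only [pow_mul] at hspec ⊢
  exact squeeze_zero (fun n => norm_nonneg _)
    (fun n => norm_cfc_ite_sub_smul_pow_sub_sum_le hr₀ hr₁ hA hspec k n)
    (tendsto_pow_atTop_nhds_zero_of_lt_one hr₀.le hr₁)
end

section
/- Set A := b*b and assume that the spectrum of A is contained in {0} ∪ { q^{2k} : k ∈ ℕ }. Then for every k ∈ ℕ: χ_{\{q^{2k}\}}(A) · a* = a* · χ_{\{q^{2(k+1)}\}}(A). -/
/-!
Write `A = b*b` and `P m = χ_{q^{2m}}(A)`. The relations give `a* A = q² A a*`. Since `q^{2m}` is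
an isolated point of the spectrum, `g t = (t - q^{2m})⁻¹` is continuous there and
`P m = 1 - (A - q^{2m}) g(A)`; hence `y P m = y` whenever `y A = q^{2m} y`, and
`P m y = y` whenever `A y = q^{2m} y`. Now `P k a*` satisfies the first equation for `m = k + 1`
and `a* P (k+1)` the second one for `m = k`, so both equal `P k a* P (k+1)`.
-/

open Filter Set

theorem ContinuousOn.of_sdiff_singleton {X Y : Type*} [TopologicalSpace X] [T1Space X]
    [TopologicalSpace Y] {f : X → Y} {s : Set X} {x : X} (hx : x ∉ closure (s \ {x}))
    (hf : ContinuousOn f (s \ {x})) : ContinuousOn f s := by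
  intro y hy
  rw [← continuousWithinAt_sdiff_singleton (y := x)]
  rcases eq_or_ne y x with rfl | hne
  · rw [mem_closure_iff_nhdsWithin_neBot, not_neBot] at hx
    simp [ContinuousWithinAt, hx]
  · exact hf y ⟨hy, hne⟩

section IsolatedPoint

variable {s : Set ℝ} {μ : ℝ}

lemma continuousOn_ite_eq_of_notMem_closure (hμ : μ ∉ closure (s \ {μ})) :
    ContinuousOn (fun t : ℝ => if t = μ then (1 : ℝ) else 0) s :=
  .of_sdiff_singleton hμ <| continuousOn_const.congr fun _ ht => if_neg ht.2

lemma continuousOn_inv_sub_of_notMem_closure (hμ : μ ∉ closure (s \ {μ})) :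
    ContinuousOn (fun t : ℝ => (t - μ)⁻¹) s :=
  .of_sdiff_singleton hμ <|
    (continuousOn_id.sub continuousOn_const).inv₀ fun _ ht => sub_ne_zero.mpr ht.2

end IsolatedPoint

section Spectral

variable {A : Type*} [Ring A] [StarRing A] [Algebra ℝ A] [TopologicalSpace A]
  [ContinuousFunctionalCalculus ℝ A IsSelfAdjoint] {x : A} {μ : ℝ}

lemma cfc_ite_eq_mul_self (hμ : μ ∉ closure (spectrum ℝ x \ {μ}))
    (hx : IsSelfAdjoint x := by cfc_tac) :
    cfc (fun t : ℝ => if t = μ then (1 : ℝ) else 0) x * x =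
      μ • cfc (fun t : ℝ => if t = μ then (1 : ℝ) else 0) x := by
  have := continuousOn_ite_eq_of_notMem_closure hμ
  conv_lhs => enter [2]; rw [← cfc_id' ℝ x]
  rw [← cfc_mul .., ← cfc_smul ..]
  congr! 2 with t
  split_ifs with h <;> simp [h]

lemma cfc_ite_eq_eq_one_sub_mul (hμ : μ ∉ closure (spectrum ℝ x \ {μ}))
    (hx : IsSelfAdjoint x := by cfc_tac) :
    cfc (fun t : ℝ => if t = μ then (1 : ℝ) else 0) x =
      1 - (x - algebraMap ℝ A μ) * cfc (fun t : ℝ => (t - μ)⁻¹) x := by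
  have := continuousOn_inv_sub_of_notMem_closure hμ
  calc cfc (fun t : ℝ => if t = μ then (1 : ℝ) else 0) x
      = cfc (fun t : ℝ => 1 - (t - μ) * (t - μ)⁻¹) x := by
        -- pointwise on all of `ℝ`, thanks to the junk value `0⁻¹ = 0` at `t = μ`
        congr! 2 with t
        rcases eq_or_ne t μ with rfl | h
        · simp
        · simp [h, sub_ne_zero.mpr h]
    _ = 1 - (x - algebraMap ℝ A μ) * cfc (fun t : ℝ => (t - μ)⁻¹) x := by
        rw [cfc_sub .., cfc_const_one .., cfc_mul .., cfc_sub .., cfc_id' .., cfc_const ..]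

lemma mul_cfc_ite_eq_of_mul_eq_smul (hμ : μ ∉ closure (spectrum ℝ x \ {μ})) {y : A}
    (hy : y * x = μ • y) (hx : IsSelfAdjoint x := by cfc_tac) :
    y * cfc (fun t : ℝ => if t = μ then (1 : ℝ) else 0) x = y := by
  have hy' : y * (x - algebraMap ℝ A μ) = 0 := by
    rw [mul_sub, hy, ← Algebra.commutes, ← Algebra.smul_def, sub_self]
  rw [cfc_ite_eq_eq_one_sub_mul hμ, mul_sub, mul_one, ← mul_assoc, hy', zero_mul, sub_zero]

lemma cfc_ite_eq_mul_of_mul_eq_smul [IsTopologicalRing A] [T2Space A]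
    (hμ : μ ∉ closure (spectrum ℝ x \ {μ})) {y : A}
    (hy : x * y = μ • y) (hx : IsSelfAdjoint x := by cfc_tac) :
    cfc (fun t : ℝ => if t = μ then (1 : ℝ) else 0) x * y = y := by
  have hy' : (x - algebraMap ℝ A μ) * y = 0 := by
    rw [sub_mul, hy, ← Algebra.smul_def, sub_self]
  have hcomm : Commute (x - algebraMap ℝ A μ) (cfc (fun t : ℝ => (t - μ)⁻¹) x) :=
    (((Commute.refl x).sub_right (Algebra.commute_algebraMap_right μ x)).cfc_real _).symm
  rw [cfc_ite_eq_eq_one_sub_mul hμ, hcomm.eq, sub_mul, one_mul, mul_assoc, hy', mul_zero, sub_zero]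

end Spectral

lemma pow_notMem_closure_sdiff {r : ℝ} (hr₀ : 0 < r) (hr₁ : r < 1) (m : ℕ) :
    r ^ m ∉ closure (({0} ∪ range (r ^ ·)) \ {r ^ m}) := by
  rw [Metric.mem_closure_iff]
  push Not
  refine ⟨(1 - r) * r ^ m, by have := pow_pos hr₀ m; nlinarith, ?_⟩
  rintro s ⟨rfl | ⟨j, rfl⟩, hne⟩
  · rw [Real.dist_0_eq_abs, abs_of_pos (pow_pos hr₀ m)]
    nlinarith [pow_pos hr₀ m]
  · have hjm : j ≠ m := by rintro rfl; exact hne rfl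
    rw [Real.dist_eq]
    rcases hjm.lt_or_gt with hlt | hgt
    · have h₁ : r ^ m ≤ r ^ (j + 1) := pow_le_pow_of_le_one hr₀.le hr₁.le hlt
      have h₂ : r ^ m ≤ r ^ j := pow_le_pow_of_le_one hr₀.le hr₁.le hlt.le
      rw [pow_succ] at h₁
      exact le_abs.mpr (Or.inr (by nlinarith))
    · have h₁ : r ^ j ≤ r ^ (m + 1) := pow_le_pow_of_le_one hr₀.le hr₁.le hgt
      rw [pow_succ] at h₁
      exact le_abs.mpr (Or.inl (by nlinarith))

lemma star_mul_star_mul_self_of_quantumSU2 {B : Type*} [Ring B] [StarRing B] [Algebra ℂ B]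
    [StarModule ℂ B] {a b : B} {q : ℝ} (h₁ : b * a = (q : ℂ) • (a * b))
    (h₂ : star b * a = (q : ℂ) • (a * star b)) :
    star a * (star b * b) = (q ^ 2 : ℝ) • (star b * b * star a) := by
  have h : star b * b * a = (q : ℂ) ^ 2 • (a * (star b * b)) := by
    rw [mul_assoc, h₁, mul_smul_comm, ← mul_assoc, h₂, smul_mul_assoc, smul_smul, mul_assoc, sq]
  have := congrArg star h
  simp only [star_mul, star_smul, star_star, ← mul_assoc] at this
  rw [← mul_assoc, this, ← Complex.coe_smul]
  simp

theorem stmt6_general {𝒜 : Type*} [CStarAlgebra 𝒜]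
    (q : ℝ) (hq : q ∈ Set.Ioo (0 : ℝ) 1) (a b : 𝒜)
    (h1 : b * a = (q : ℂ) • (a * b))
    (h2 : star b * a = (q : ℂ) • (a * star b))
    (hspec : spectrum ℝ (star b * b) ⊆ {0} ∪ Set.range (fun k : ℕ => q ^ (2 * k))) :
    ∀ k : ℕ,
      cfc (fun t : ℝ => if t = q ^ (2 * k) then (1 : ℝ) else 0) (star b * b) * star a =
        star a * cfc (fun t : ℝ => if t = q ^ (2 * (k + 1)) then (1 : ℝ) else 0) (star b * b) := by
  intro k
  set A := star b * b
  have hq₂ : q ^ 2 ≠ 0 := pow_ne_zero 2 hq.1.ne'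
  have hiso (m : ℕ) : q ^ (2 * m) ∉ closure (spectrum ℝ A \ {q ^ (2 * m)}) := by
    simp only [pow_mul] at hspec ⊢
    exact fun h ↦ pow_notMem_closure_sdiff (pow_pos hq.1 2) (pow_lt_one₀ hq.1.le hq.2 two_ne_zero) m
      (closure_mono (sdiff_subset_sdiff_left hspec) h)
  have hA : star a * A = (q ^ 2 : ℝ) • (A * star a) := star_mul_star_mul_self_of_quantumSU2 h1 h2
  set P := cfc (fun t : ℝ => if t = q ^ (2 * k) then (1 : ℝ) else 0) A
  set P' := cfc (fun t : ℝ => if t = q ^ (2 * (k + 1)) then (1 : ℝ) else 0) A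
  have hleft : P * star a * A = q ^ (2 * (k + 1)) • (P * star a) := by
    rw [mul_assoc, hA, mul_smul_comm, ← mul_assoc, cfc_ite_eq_mul_self (hiso k), smul_mul_assoc,
      smul_smul, ← pow_add, show 2 + 2 * k = 2 * (k + 1) by ring]
  have hright : A * (star a * P') = q ^ (2 * k) • (star a * P') := by
    refine smul_right_injective 𝒜 hq₂ ?_
    dsimp only
    rw [← mul_assoc, ← smul_mul_assoc, ← hA, mul_assoc, ← ((Commute.refl A).cfc_real _).eq,
      cfc_ite_eq_mul_self (hiso (k + 1)), mul_smul_comm, smul_smul, ← pow_add,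
      show 2 + 2 * k = 2 * (k + 1) by ring]
  calc P * star a = P * star a * P' := (mul_cfc_ite_eq_of_mul_eq_smul (hiso (k + 1)) hleft).symm
    _ = star a * P' := by rw [mul_assoc, cfc_ite_eq_mul_of_mul_eq_smul (hiso k) hright]

/-- In a unital C*-algebra with elements `a, b` satisfying the quantum SU(2)
relations, setting `A := b*b`, if the spectrum of `A` is contained in `{0} ∪ {q^{2k} : k ∈ ℕ}`
then `χ_{{q^{2k}}}(A) a* = a* χ_{{q^{2(k+1)}}}(A)` for every `k ∈ ℕ`. -/
theorem stmt6 {𝒜 : Type*} [CStarAlgebra 𝒜]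
    (q : ℝ) (hq : q ∈ Set.Ioo (0 : ℝ) 1) (a b : 𝒜)
    (h1 : b * a = (q : ℂ) • (a * b))
    (h2 : star b * a = (q : ℂ) • (a * star b))
    (h3 : b * star b = star b * b)
    (h4 : star a * a + ((q : ℂ) ^ 2) • (b * star b) = 1)
    (h5 : a * star a + b * star b = 1)
    (hspec : spectrum ℝ (star b * b) ⊆ {0} ∪ Set.range (fun k : ℕ => q ^ (2 * k))) :
    ∀ k : ℕ,
      cfc (fun t : ℝ => if t = q ^ (2 * k) then (1 : ℝ) else 0) (star b * b) * star a =
        star a * cfc (fun t : ℝ => if t = q ^ (2 * (k + 1)) then (1 : ℝ) else 0) (star b * b) :=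
  stmt6_general q hq a b h1 h2 hspec
end

section
/- Let k ∈ ℕ. Every x ∈ 𝒟 ∩ Y_k with ‖∂(x)‖ ≤ 1 satisfies ‖x‖ ≤ q^k. That is, the set { x ∈ 𝒟 ∩ Y_k : ‖∂(x)‖ ≤ 1 } is norm-bounded by q^k. -/
/-! Elements `x` of `Y_k` satisfy `x P_k = x` and `x A = q^{2k} x`, so the Leibniz rule applied to
`x A` gives `x b* a* = q^{2k} ∂x - ∂x A`. Multiply on the right by `T = a b P_k`: since
`A T = q^{2k+2} T` and `b* a* T = w² P_k` with `w = q^k √(1 - q^{2k+2})`, this yields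
`w² x = q^{2k} (1 - q²) ∂x T`. The C*-identity and `T* T = w² P_k` give `‖T‖ ≤ w`, hence
`‖x‖ ≤ q^{2k} (1 - q²) ‖∂x‖ / w ≤ q^k ‖∂x‖`. -/

set_option synthInstance.maxHeartbeats 1000000
set_option maxHeartbeats 1000000

/-- The normalizing constants `C_{n,k}` of the matrix units of the Podleś sphere. -/
noncomputable def Cnk (q : ℝ) (n k : ℕ) : ℝ :=
  if k ≤ n then ∏ j ∈ Finset.Ico k n, q ^ (2 * j) * (1 - q ^ (2 * (j + 1)))
  else ∏ j ∈ Finset.Ico n k, q ^ (2 * j) * (1 - q ^ (2 * (j + 1)))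

theorem mul_eq_smul_of_mem_topologicalClosure_span {R A : Type*} [CommSemiring R] [Semiring A]
    [Algebra R A] [TopologicalSpace A] [IsTopologicalSemiring A] [ContinuousConstSMul R A]
    [T2Space A] {s : Set A} {r : A} {c : R} (hs : s ⊆ {y | y * r = c • y}) {x : A}
    (hx : x ∈ (Submodule.span R s).topologicalClosure) : x * r = c • x := by
  let K : Submodule R A := LinearMap.eqLocus (LinearMap.mulRight R r) (c • LinearMap.id)
  have hK : IsClosed (K : Set A) := isClosed_eq (continuous_mul_const r) (continuous_const_smul c)
  exact Submodule.topologicalClosure_minimal _ (Submodule.span_le.mpr hs) hK hx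

theorem norm_sq_le_of_star_mul_self_eq_smul {𝕜 E : Type*} [NormedField 𝕜] [NormedRing E]
    [StarRing E] [CStarRing E] [NormedAlgebra 𝕜 E] {t p : E} {γ : 𝕜} (hp : p * p = p)
    (ht : star t * t = γ • p) : ‖t‖ ^ 2 ≤ ‖γ‖ := by
  have hM : IsSelfAdjoint (star t * t) := .star_mul_self t
  have hMM : ‖star t * t‖ ^ 2 = ‖γ‖ * ‖star t * t‖ := by
    rw [← hM.norm_mul_self, ht, smul_mul_smul_comm, hp, mul_smul, norm_smul, norm_smul]
  rw [sq, ← CStarRing.norm_star_mul_self]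
  nlinarith [norm_nonneg (star t * t), norm_nonneg γ]

namespace HilbertBasis

variable {ι 𝕜 E : Type*} [RCLike 𝕜] [NormedAddCommGroup E] [InnerProductSpace 𝕜 E]

theorem ext_continuousLinearMap {F : Type*} [TopologicalSpace F] [AddCommMonoid F] [Module 𝕜 F]
    [T2Space F] (b : HilbertBasis ι 𝕜 E) {f g : E →L[𝕜] F} (h : ∀ i, f (b i) = g (b i)) :
    f = g :=
  ContinuousLinearMap.ext_on (Submodule.dense_iff_topologicalClosure_eq_top.mpr b.dense_span)
    (Set.forall_mem_range.mpr h)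

theorem isSelfAdjoint_of_apply_eq_smul [CompleteSpace E] (b : HilbertBasis ι 𝕜 E)
    {T : E →L[𝕜] E} (r : ι → ℝ) (hT : ∀ i, T (b i) = (r i : 𝕜) • b i) : IsSelfAdjoint T := by
  classical
  refine b.ext_continuousLinearMap fun i => b.repr.injective (lp.ext <| funext fun j => ?_)
  rw [b.repr_apply_apply, b.repr_apply_apply, ContinuousLinearMap.star_eq_adjoint,
    ContinuousLinearMap.adjoint_inner_right, hT, hT, inner_smul_left, inner_smul_right,
    orthonormal_iff_ite.mp b.orthonormal]
  split_ifs with hji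
  · subst hji; simp
  · simp

end HilbertBasis

namespace Podles

variable {H : Type*} [NormedAddCommGroup H] [InnerProductSpace ℂ H]
  {q : ℝ} {e : HilbertBasis (ℕ × ℤ) ℂ H} {a b : H →L[ℂ] H} {P : ℕ → H →L[ℂ] H}

/-- The matrix coefficient of `a b` from row `k` to row `k + 1`. -/
noncomputable def weight (q : ℝ) (k : ℕ) : ℝ := q ^ k * √(1 - q ^ (2 * (k + 1)))

theorem weight_pos (hq0 : 0 < q) (hq1 : q < 1) (k : ℕ) : 0 < weight q k :=
  mul_pos (pow_pos hq0 k) <| Real.sqrt_pos.mpr <| sub_pos.mpr <| pow_lt_one₀ hq0.le hq1 (by omega)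

theorem sub_le_pow_mul_weight (hq0 : 0 ≤ q) (hq1 : q ≤ 1) (k : ℕ) :
    q ^ (2 * k) - q ^ (2 * (k + 1)) ≤ q ^ k * weight q k := by
  have hpow : q ^ (2 * (k + 1)) ≤ q ^ 2 := pow_le_pow_of_le_one hq0 hq1 (by omega)
  have hsqrt : 1 - q ^ 2 ≤ √(1 - q ^ (2 * (k + 1))) :=
    calc 1 - q ^ 2 ≤ 1 - q ^ (2 * (k + 1)) := by linarith
      _ ≤ √(1 - q ^ (2 * (k + 1))) :=
        Real.le_sqrt_self_iff.mpr (by linarith [pow_nonneg hq0 (2 * (k + 1))])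
  calc q ^ (2 * k) - q ^ (2 * (k + 1)) = q ^ k * q ^ k * (1 - q ^ 2) := by ring
    _ ≤ q ^ k * q ^ k * √(1 - q ^ (2 * (k + 1))) := by gcongr
    _ = q ^ k * weight q k := by rw [weight]; ring

theorem proj_mul_self (hP : ∀ (k n : ℕ) (m : ℤ), P k (e (n, m)) = if n = k then e (n, m) else 0)
    (k : ℕ) : P k * P k = P k :=
  e.ext_continuousLinearMap fun ⟨n, m⟩ => by
    by_cases h : n = k <;> simp [hP, h]

theorem a_mul_b_mul_proj_apply
    (ha : ∀ (n : ℕ) (m : ℤ),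
      a (e (n, m)) = ((Real.sqrt (1 - q ^ (2 * (n + 1))) : ℝ) : ℂ) • e (n + 1, m))
    (hb : ∀ (n : ℕ) (m : ℤ), b (e (n, m)) = ((q ^ n : ℝ) : ℂ) • e (n, m + 1))
    (hP : ∀ (k n : ℕ) (m : ℤ), P k (e (n, m)) = if n = k then e (n, m) else 0)
    (k n : ℕ) (m : ℤ) :
    (a * b * P k) (e (n, m)) = if n = k then ((weight q k : ℝ) : ℂ) • e (k + 1, m + 1) else 0 := by
  by_cases h : n = k
  · subst h
    rw [if_pos rfl, mul_apply_eq_comp, mul_apply_eq_comp, hP, if_pos rfl, hb, map_smul, ha,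
      smul_smul, ← Complex.ofReal_mul, weight]
  · simp [hP, h]

variable [CompleteSpace H]

theorem starb_mul_b_apply
    (hb : ∀ (n : ℕ) (m : ℤ), b (e (n, m)) = ((q ^ n : ℝ) : ℂ) • e (n, m + 1))
    (hbs : ∀ (n : ℕ) (m : ℤ), (star b) (e (n, m)) = ((q ^ n : ℝ) : ℂ) • e (n, m - 1))
    (n : ℕ) (m : ℤ) : (star b * b) (e (n, m)) = ((q ^ (2 * n) : ℝ) : ℂ) • e (n, m) := by
  rw [mul_apply_eq_comp, hb, map_smul, hbs, add_sub_cancel_right, smul_smul,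
    ← Complex.ofReal_mul, ← pow_add, two_mul]

theorem isSelfAdjoint_proj
    (hP : ∀ (k n : ℕ) (m : ℤ), P k (e (n, m)) = if n = k then e (n, m) else 0) (k : ℕ) :
    IsSelfAdjoint (P k) :=
  e.isSelfAdjoint_of_apply_eq_smul (fun i => if i.1 = k then 1 else 0) fun ⟨n, m⟩ => by
    by_cases h : n = k <;> simp [hP, h]

theorem proj_mul_starb_mul_b
    (hb : ∀ (n : ℕ) (m : ℤ), b (e (n, m)) = ((q ^ n : ℝ) : ℂ) • e (n, m + 1))
    (hbs : ∀ (n : ℕ) (m : ℤ), (star b) (e (n, m)) = ((q ^ n : ℝ) : ℂ) • e (n, m - 1))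
    (hP : ∀ (k n : ℕ) (m : ℤ), P k (e (n, m)) = if n = k then e (n, m) else 0) (k : ℕ) :
    P k * (star b * b) = ((q ^ (2 * k) : ℝ) : ℂ) • P k :=
  e.ext_continuousLinearMap fun ⟨n, m⟩ => by
    by_cases h : n = k
    · subst h; simp [starb_mul_b_apply hb hbs, hP]
    · simp [starb_mul_b_apply hb hbs, hP, h]

theorem starb_mul_b_mul_a_mul_b_mul_proj
    (ha : ∀ (n : ℕ) (m : ℤ),
      a (e (n, m)) = ((Real.sqrt (1 - q ^ (2 * (n + 1))) : ℝ) : ℂ) • e (n + 1, m))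
    (hb : ∀ (n : ℕ) (m : ℤ), b (e (n, m)) = ((q ^ n : ℝ) : ℂ) • e (n, m + 1))
    (hbs : ∀ (n : ℕ) (m : ℤ), (star b) (e (n, m)) = ((q ^ n : ℝ) : ℂ) • e (n, m - 1))
    (hP : ∀ (k n : ℕ) (m : ℤ), P k (e (n, m)) = if n = k then e (n, m) else 0) (k : ℕ) :
    star b * b * (a * b * P k) = ((q ^ (2 * (k + 1)) : ℝ) : ℂ) • (a * b * P k) :=
  e.ext_continuousLinearMap fun ⟨n, m⟩ => by
    by_cases h : n = k
    · rw [mul_apply_eq_comp, a_mul_b_mul_proj_apply ha hb hP, if_pos h, map_smul,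
        starb_mul_b_apply hb hbs, smul_apply, a_mul_b_mul_proj_apply ha hb hP, if_pos h, smul_comm]
    · simp [a_mul_b_mul_proj_apply ha hb hP, h]

theorem starb_mul_stara_mul_a_mul_b_mul_proj
    (ha : ∀ (n : ℕ) (m : ℤ),
      a (e (n, m)) = ((Real.sqrt (1 - q ^ (2 * (n + 1))) : ℝ) : ℂ) • e (n + 1, m))
    (hb : ∀ (n : ℕ) (m : ℤ), b (e (n, m)) = ((q ^ n : ℝ) : ℂ) • e (n, m + 1))
    (has : ∀ (n : ℕ) (m : ℤ),
      (star a) (e (n + 1, m)) = ((Real.sqrt (1 - q ^ (2 * (n + 1))) : ℝ) : ℂ) • e (n, m))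
    (hbs : ∀ (n : ℕ) (m : ℤ), (star b) (e (n, m)) = ((q ^ n : ℝ) : ℂ) • e (n, m - 1))
    (hP : ∀ (k n : ℕ) (m : ℤ), P k (e (n, m)) = if n = k then e (n, m) else 0) (k : ℕ) :
    star b * star a * (a * b * P k) = ((weight q k ^ 2 : ℝ) : ℂ) • P k :=
  e.ext_continuousLinearMap fun ⟨n, m⟩ => by
    by_cases h : n = k
    · subst h
      rw [mul_apply_eq_comp, a_mul_b_mul_proj_apply ha hb hP, if_pos rfl, smul_apply, hP,
        if_pos rfl, map_smul, mul_apply_eq_comp, has, map_smul, hbs, add_sub_cancel_right,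
        smul_smul, ← Complex.ofReal_mul, smul_smul, ← Complex.ofReal_mul, weight]
      congr 2
      ring
    · simp [a_mul_b_mul_proj_apply ha hb hP, hP, h]

theorem norm_a_mul_b_mul_proj_le
    (ha : ∀ (n : ℕ) (m : ℤ),
      a (e (n, m)) = ((Real.sqrt (1 - q ^ (2 * (n + 1))) : ℝ) : ℂ) • e (n + 1, m))
    (hb : ∀ (n : ℕ) (m : ℤ), b (e (n, m)) = ((q ^ n : ℝ) : ℂ) • e (n, m + 1))
    (has : ∀ (n : ℕ) (m : ℤ),
      (star a) (e (n + 1, m)) = ((Real.sqrt (1 - q ^ (2 * (n + 1))) : ℝ) : ℂ) • e (n, m))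
    (hbs : ∀ (n : ℕ) (m : ℤ), (star b) (e (n, m)) = ((q ^ n : ℝ) : ℂ) • e (n, m - 1))
    (hP : ∀ (k n : ℕ) (m : ℤ), P k (e (n, m)) = if n = k then e (n, m) else 0)
    (hq0 : 0 < q) (hq1 : q < 1) (k : ℕ) : ‖a * b * P k‖ ≤ weight q k := by
  have hT : star (a * b * P k) * (a * b * P k) = ((weight q k ^ 2 : ℝ) : ℂ) • P k := by
    rw [star_mul, star_mul, (isSelfAdjoint_proj hP k).star_eq, mul_assoc,
      starb_mul_stara_mul_a_mul_b_mul_proj ha hb has hbs hP, mul_smul_comm, proj_mul_self hP]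
  have hsq := norm_sq_le_of_star_mul_self_eq_smul (proj_mul_self hP k) hT
  rw [Complex.norm_real, Real.norm_of_nonneg (sq_nonneg _)] at hsq
  exact (pow_le_pow_iff_left₀ (norm_nonneg _) (weight_pos hq0 hq1 k).le two_ne_zero).mp hsq

theorem norm_le_of_mul_proj_eq_self_of_leibniz
    (ha : ∀ (n : ℕ) (m : ℤ),
      a (e (n, m)) = ((Real.sqrt (1 - q ^ (2 * (n + 1))) : ℝ) : ℂ) • e (n + 1, m))
    (hb : ∀ (n : ℕ) (m : ℤ), b (e (n, m)) = ((q ^ n : ℝ) : ℂ) • e (n, m + 1))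
    (has : ∀ (n : ℕ) (m : ℤ),
      (star a) (e (n + 1, m)) = ((Real.sqrt (1 - q ^ (2 * (n + 1))) : ℝ) : ℂ) • e (n, m))
    (hbs : ∀ (n : ℕ) (m : ℤ), (star b) (e (n, m)) = ((q ^ n : ℝ) : ℂ) • e (n, m - 1))
    (hP : ∀ (k n : ℕ) (m : ℤ), P k (e (n, m)) = if n = k then e (n, m) else 0)
    (hq0 : 0 < q) (hq1 : q < 1) {k : ℕ} {x y : H →L[ℂ] H} (hxP : x * P k = x)
    (hxy : ((q ^ (2 * k) : ℝ) : ℂ) • y = y * (star b * b) + x * (star b * star a))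
    (hy : ‖y‖ ≤ 1) : ‖x‖ ≤ q ^ k := by
  set T := a * b * P k
  set w := weight q k
  have hw : 0 < w := weight_pos hq0 hq1 k
  have hd : 0 ≤ q ^ (2 * k) - q ^ (2 * (k + 1)) :=
    sub_nonneg.mpr (pow_le_pow_of_le_one hq0.le hq1.le (by omega))
  have hx : ((w ^ 2 : ℝ) : ℂ) • x = ((q ^ (2 * k) - q ^ (2 * (k + 1)) : ℝ) : ℂ) • (y * T) :=
    calc ((w ^ 2 : ℝ) : ℂ) • x = x * (((w ^ 2 : ℝ) : ℂ) • P k) := by rw [mul_smul_comm, hxP]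
      _ = (((q ^ (2 * k) : ℝ) : ℂ) • y - y * (star b * b)) * T := by
        rw [← starb_mul_stara_mul_a_mul_b_mul_proj ha hb has hbs hP, ← mul_assoc, hxy,
          add_sub_cancel_left]
      _ = _ := by
        rw [sub_mul, mul_assoc, starb_mul_b_mul_a_mul_b_mul_proj ha hb hbs hP, smul_mul_assoc,
          mul_smul_comm, ← sub_smul, Complex.ofReal_sub]
  have hnorm : w ^ 2 * ‖x‖ ≤ w ^ 2 * q ^ k :=
    calc w ^ 2 * ‖x‖ = (q ^ (2 * k) - q ^ (2 * (k + 1))) * ‖y * T‖ := by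
          have h := congrArg norm hx
          rwa [norm_smul, norm_smul, Complex.norm_real, Complex.norm_real,
            Real.norm_of_nonneg (sq_nonneg w), Real.norm_of_nonneg hd] at h
      _ ≤ (q ^ (2 * k) - q ^ (2 * (k + 1))) * (1 * w) := by
          gcongr
          exact (norm_mul_le y T).trans
            (mul_le_mul hy (norm_a_mul_b_mul_proj_le ha hb has hbs hP hq0 hq1 k) (norm_nonneg _)
              zero_le_one)
      _ ≤ q ^ k * w * w := by
          rw [one_mul]; gcongr; exact sub_le_pow_mul_weight hq0.le hq1.le k
      _ = w ^ 2 * q ^ k := by ring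
  exact le_of_mul_le_mul_left hnorm (by positivity)

end Podles

theorem stmt14_general
    {H : Type*} [NormedAddCommGroup H] [InnerProductSpace ℂ H] [CompleteSpace H]
    (q : ℝ) (hq : q ∈ Set.Ioo (0 : ℝ) 1)
    (e : HilbertBasis (ℕ × ℤ) ℂ H)
    (a b : H →L[ℂ] H)
    (ha : ∀ (n : ℕ) (m : ℤ),
      a (e (n, m)) = ((Real.sqrt (1 - q ^ (2 * (n + 1))) : ℝ) : ℂ) • e (n + 1, m))
    (hb : ∀ (n : ℕ) (m : ℤ), b (e (n, m)) = ((q ^ n : ℝ) : ℂ) • e (n, m + 1))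
    (has : ∀ (n : ℕ) (m : ℤ),
      (star a) (e (n + 1, m)) = ((Real.sqrt (1 - q ^ (2 * (n + 1))) : ℝ) : ℂ) • e (n, m))
    (hbs : ∀ (n : ℕ) (m : ℤ), (star b) (e (n, m)) = ((q ^ n : ℝ) : ℂ) • e (n, m - 1))
    (A B : H →L[ℂ] H) (hA : A = star b * b)
    (D : Subalgebra ℂ (H →L[ℂ] H))
    (hAD : A ∈ D)
    (δ : D →ₗ[ℂ] (H →L[ℂ] H))
    (hLeib : ∀ x y : D, δ (x * y) = δ x * (y : H →L[ℂ] H) + (x : H →L[ℂ] H) * δ y)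
    (hδA : δ ⟨A, hAD⟩ = star b * star a)
    (P : ℕ → (H →L[ℂ] H))
    (hP : ∀ (k n : ℕ) (m : ℤ), (P k) (e (n, m)) = if n = k then e (n, m) else 0)
    (f : ℕ → ℕ → (H →L[ℂ] H))
    (hf : ∀ n k : ℕ, f n k =
      if k ≤ n then (((Real.sqrt (Cnk q n k))⁻¹ : ℝ) : ℂ) • (B ^ (n - k) * P k)
      else (((Real.sqrt (Cnk q n k))⁻¹ : ℝ) : ℂ) • ((star B) ^ (k - n) * P k))
    :
    ∀ k : ℕ, ∀ x : H →L[ℂ] H, ∀ hx : x ∈ D,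
      x ∈ (Submodule.span ℂ (Set.range fun n => f n k)).topologicalClosure →
      ‖δ ⟨x, hx⟩‖ ≤ 1 → ‖x‖ ≤ q ^ k := by
  intro k x hx hxY hδx
  subst hA
  obtain ⟨hq0, hq1⟩ := hq
  have hY (R : H →L[ℂ] H) (c : ℂ) (hPR : P k * R = c • P k) :
      Set.range (fun n => f n k) ⊆ {y | y * R = c • y} := by
    rintro _ ⟨n, rfl⟩
    show f n k * R = c • f n k
    rw [hf n k]
    split_ifs <;> rw [smul_mul_assoc, mul_assoc, hPR, mul_smul_comm, smul_comm]
  have hxP : x * P k = x := by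
    simpa using mul_eq_smul_of_mem_topologicalClosure_span
      (hY _ 1 (by rw [one_smul, Podles.proj_mul_self hP])) hxY
  have hxA : x * (star b * b) = ((q ^ (2 * k) : ℝ) : ℂ) • x :=
    mul_eq_smul_of_mem_topologicalClosure_span
      (hY _ _ (Podles.proj_mul_starb_mul_b hb hbs hP k)) hxY
  have hxy : ((q ^ (2 * k) : ℝ) : ℂ) • δ ⟨x, hx⟩ =
      δ ⟨x, hx⟩ * (star b * b) + x * (star b * star a) := by
    have h := hLeib ⟨x, hx⟩ ⟨_, hAD⟩
    rwa [show (⟨x, hx⟩ * ⟨_, hAD⟩ : D) = ((q ^ (2 * k) : ℝ) : ℂ) • ⟨x, hx⟩ from Subtype.ext hxA,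
      map_smul, hδA] at h
  exact Podles.norm_le_of_mul_proj_eq_self_of_leibniz ha hb has hbs hP hq0 hq1 hxP hxy hδx

/-- Every `x ∈ 𝒟 ∩ Y_k` with `‖∂(x)‖ ≤ 1` satisfies `‖x‖ ≤ q^k`. -/
theorem stmt14
    {H : Type*} [NormedAddCommGroup H] [InnerProductSpace ℂ H] [CompleteSpace H]
    (q : ℝ) (hq : q ∈ Set.Ioo (0 : ℝ) 1)
    (e : HilbertBasis (ℕ × ℤ) ℂ H)
    (a b : H →L[ℂ] H)
    (ha : ∀ (n : ℕ) (m : ℤ),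
      a (e (n, m)) = ((Real.sqrt (1 - q ^ (2 * (n + 1))) : ℝ) : ℂ) • e (n + 1, m))
    (hb : ∀ (n : ℕ) (m : ℤ), b (e (n, m)) = ((q ^ n : ℝ) : ℂ) • e (n, m + 1))
    (has0 : ∀ m : ℤ, (star a) (e (0, m)) = 0)
    (has : ∀ (n : ℕ) (m : ℤ),
      (star a) (e (n + 1, m)) = ((Real.sqrt (1 - q ^ (2 * (n + 1))) : ℝ) : ℂ) • e (n, m))
    (hbs : ∀ (n : ℕ) (m : ℤ), (star b) (e (n, m)) = ((q ^ n : ℝ) : ℂ) • e (n, m - 1))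
    (A B : H →L[ℂ] H) (hA : A = star b * b) (hB : B = a * star b)
    (S : StarSubalgebra ℂ (H →L[ℂ] H))
    (hS : S = (StarAlgebra.adjoin ℂ ({A, B} : Set (H →L[ℂ] H))).topologicalClosure)
    (D : Subalgebra ℂ (H →L[ℂ] H)) (hDS : (D : Set (H →L[ℂ] H)) ⊆ (S : Set (H →L[ℂ] H)))
    (hAD : A ∈ D) (hBD : B ∈ D) (hBsD : star B ∈ D)
    (δ : D →ₗ[ℂ] (H →L[ℂ] H))
    (hLeib : ∀ x y : D, δ (x * y) = δ x * (y : H →L[ℂ] H) + (x : H →L[ℂ] H) * δ y)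
    (hδA : δ ⟨A, hAD⟩ = star b * star a)
    (hδB : δ ⟨B, hBD⟩ = -(star b) ^ 2)
    (hδBs : δ ⟨star B, hBsD⟩ = (((q : ℝ)⁻¹ : ℝ) : ℂ) • (star a) ^ 2)
    (hclosed : ∀ (u : ℕ → D) (x y : H →L[ℂ] H),
      Filter.Tendsto (fun j => (u j : H →L[ℂ] H)) Filter.atTop (nhds x) →
      Filter.Tendsto (fun j => δ (u j)) Filter.atTop (nhds y) →
      ∃ hx : x ∈ D, δ ⟨x, hx⟩ = y)
    (P : ℕ → (H →L[ℂ] H))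
    (hP : ∀ (k n : ℕ) (m : ℤ), (P k) (e (n, m)) = if n = k then e (n, m) else 0)
    (f : ℕ → ℕ → (H →L[ℂ] H))
    (hf : ∀ n k : ℕ, f n k =
      if k ≤ n then (((Real.sqrt (Cnk q n k))⁻¹ : ℝ) : ℂ) • (B ^ (n - k) * P k)
      else (((Real.sqrt (Cnk q n k))⁻¹ : ℝ) : ℂ) • ((star B) ^ (k - n) * P k))
    :
    ∀ k : ℕ, ∀ x : H →L[ℂ] H, ∀ hx : x ∈ D,
      x ∈ (Submodule.span ℂ (Set.range fun n => f n k)).topologicalClosure →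
      ‖δ ⟨x, hx⟩‖ ≤ 1 → ‖x‖ ≤ q ^ k :=
  stmt14_general q hq e a b ha hb has hbs A B hA D hAD δ hLeib hδA P hP f hf
end
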